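/- Let f : ℝ^d → ℝ be convex with ‖∇f(x)‖₁ ≤ B for all x. Run the SGD-BGO recursion x_{k+1} = x_k − γ_k g_k with an oracle of type (O2), step sizes γ_k > 0, perturbation constants η_k > 0 and batch sizes m_k > 0, and suppose ‖x_k − x_{k₀}‖ ≤ D for all k (D bounds the iterate distances). Then for any indices 1 < k₀ < k₁ ≤ N, Σ_{k=k₀}^{k₁} 2 γ_k E[f(x_k) − f(x_{k₀})] ≤ Σ_{k=k₀}^{k₁} ( 2√d γ_k D E_k + γ_k² B_k² ), where E_k = c₁ η_k + c₃/(η_k √m_k) and B_k² = B² + 2√d B E_k + d E_k² + c₂ η_k² + c̃₂. -/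

import Mathlib

/-!
Let `a_k = 𝔼‖x_k - x_{k₀}‖²`. Expanding one step of the recursion gives
`a_{k+1} = a_k - 2γ_k 𝔼⟪x_k - x_{k₀}, g_k⟫ + γ_k² 𝔼‖g_k‖²`. As `x_k - x_{k₀}` is
`ℱ_k`-measurable, `g_k` may be replaced by its conditional mean `h_k` in the middle term; `h_k` is
within `√d E_k` of `∇f(x_k)` in Euclidean norm, so the first-order convexity inequality gives
`⟪x_k - x_{k₀}, h_k⟫ ≥ f(x_k) - f(x_{k₀}) - √d E_k D`. The second moment splits orthogonally as
`𝔼‖g_k - h_k‖² + 𝔼‖h_k‖² ≤ c₂ η_k² + c̃₂ + (B + √d E_k)² = B_k²`. Summing over the window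
telescopes, with `a_{k₀} = 0` and `a_{k₁+1} ≥ 0`.
-/

open MeasureTheory Real
open scoped InnerProductSpace Gradient

theorem EuclideanSpace.norm_le_sum_abs {ι : Type*} [Fintype ι] (v : EuclideanSpace ℝ ι) :
    ‖v‖ ≤ ∑ i, |v i| := by
  rw [EuclideanSpace.norm_eq, Real.sqrt_le_left (Finset.sum_nonneg fun i _ => abs_nonneg _)]
  simpa only [Real.norm_eq_abs, sq_abs] using
    Finset.sum_sq_le_sq_sum_of_nonneg (s := Finset.univ) fun i _ => abs_nonneg (v i)

theorem EuclideanSpace.norm_le_sqrt_card_mul {ι : Type*} [Fintype ι] {v : EuclideanSpace ℝ ι}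
    {c : ℝ} (hv : ∀ i, |v i| ≤ c) : ‖v‖ ≤ √(Fintype.card ι) * c := by
  rcases isEmpty_or_nonempty ι with hι | ⟨⟨i₀⟩⟩
  · simp [Subsingleton.elim v 0]
  have hc : 0 ≤ c := (abs_nonneg _).trans (hv i₀)
  calc ‖v‖ = √(∑ i, |v i| ^ 2) := by simp [EuclideanSpace.norm_eq]
    _ ≤ √(∑ _i : ι, c ^ 2) := by gcongr with i; exact hv i
    _ = √(Fintype.card ι) * c := by simp [Real.sqrt_mul, Real.sqrt_sq hc]

section Gradient

variable {F : Type*} [NormedAddCommGroup F] [InnerProductSpace ℝ F] [CompleteSpace F]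
  {f : F → ℝ}

theorem norm_gradient (f : F → ℝ) (x : F) : ‖∇ f x‖ = ‖fderiv ℝ f x‖ :=
  (InnerProductSpace.toDual ℝ F).symm.norm_map _

theorem ConvexOn.add_inner_gradient_sub_le (hf : ConvexOn ℝ Set.univ f) {a : F}
    (ha : DifferentiableAt ℝ f a) (b : F) : f a + ⟪∇ f a, b - a⟫_ℝ ≤ f b := by
  have hline : ConvexOn ℝ Set.univ (f ∘ AffineMap.lineMap (k := ℝ) a b) := by
    simpa using hf.comp_affineMap (AffineMap.lineMap (k := ℝ) a b)
  have hderiv : HasDerivAt (f ∘ AffineMap.lineMap (k := ℝ) a b) (fderiv ℝ f a (b - a)) 0 := by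
    simpa using ha.hasFDerivAt.comp_hasDerivAt_of_eq 0 AffineMap.hasDerivAt_lineMap (by simp)
  have := hline.le_slope_of_hasDerivAt (Set.mem_univ 0) (Set.mem_univ 1) one_pos hderiv
  simp only [slope_def_field, Function.comp_apply, AffineMap.lineMap_apply_zero,
    AffineMap.lineMap_apply_one, sub_zero, div_one] at this
  rw [gradient, InnerProductSpace.toDual_symm_apply]
  linarith

theorem abs_sub_le_of_norm_gradient_le (hf : Differentiable ℝ f) {G : ℝ}
    (hG : ∀ z, ‖∇ f z‖ ≤ G) (a b : F) : |f a - f b| ≤ G * ‖a - b‖ :=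
  convex_univ.norm_image_sub_le_of_norm_fderiv_le (fun z _ => hf z)
    (fun z _ => norm_gradient f z ▸ hG z) (Set.mem_univ b) (Set.mem_univ a)

end Gradient

section CondExp

variable {Ω E : Type*} {m mΩ : MeasurableSpace Ω} {μ : Measure Ω}
  [NormedAddCommGroup E]

theorem integrable_norm_sq_of_bound [IsFiniteMeasure μ] {g : Ω → E}
    (hg : AEStronglyMeasurable g μ) {C : ℝ} (hC : ∀ᵐ ω ∂μ, ‖g ω‖ ≤ C) :
    Integrable (fun ω => ‖g ω‖ ^ 2) μ :=
  Integrable.of_bound (hg.norm.pow 2) (C ^ 2) <| by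
    filter_upwards [hC] with ω hω
    rw [norm_pow, norm_norm]
    exact pow_le_pow_left₀ (norm_nonneg _) hω 2

variable [InnerProductSpace ℝ E]

theorem integrable_inner_of_bound_left {z g : Ω → E} (hz : AEStronglyMeasurable z μ) {C : ℝ}
    (hC : ∀ᵐ ω ∂μ, ‖z ω‖ ≤ C) (hg : Integrable g μ) :
    Integrable (fun ω => ⟪z ω, g ω⟫_ℝ) μ :=
  (innerSL ℝ).integrable_of_bilin_of_bdd_left C hz hC hg

variable [CompleteSpace E]

theorem ae_norm_condExp_le (hm : m ≤ mΩ) [IsFiniteMeasure μ] {g : Ω → E} (hg : Integrable g μ)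
    {C : ℝ} (hC : ∀ᵐ ω ∂μ, ‖g ω‖ ≤ C) : ∀ᵐ ω ∂μ, ‖(μ[g|m]) ω‖ ≤ C := by
  simpa using (convex_closedBall (0 : E) C).condExp_mem hm hg Metric.isClosed_closedBall
    (by simpa using hC)

theorem integral_inner_condExp_right (hm : m ≤ mΩ) [IsFiniteMeasure μ] {z g : Ω → E}
    (hz : StronglyMeasurable[m] z) {C : ℝ} (hC : ∀ᵐ ω ∂μ, ‖z ω‖ ≤ C) (hg : Integrable g μ) :
    ∫ ω, ⟪z ω, g ω⟫_ℝ ∂μ = ∫ ω, ⟪z ω, (μ[g|m]) ω⟫_ℝ ∂μ := by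
  rw [← integral_condExp hm]
  exact integral_congr_ae (condExp_stronglyMeasurable_bilin_of_bound (innerSL ℝ) hm hz hg C hC)

theorem integral_norm_sq_eq_integral_norm_sub_condExp_sq_add (hm : m ≤ mΩ) [IsFiniteMeasure μ]
    {g : Ω → E} (hg : AEStronglyMeasurable g μ) {C : ℝ} (hC : ∀ᵐ ω ∂μ, ‖g ω‖ ≤ C) :
    ∫ ω, ‖g ω‖ ^ 2 ∂μ = ∫ ω, ‖g ω - (μ[g|m]) ω‖ ^ 2 ∂μ + ∫ ω, ‖(μ[g|m]) ω‖ ^ 2 ∂μ := by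
  set h := μ[g|m]
  have hg_int : Integrable g μ := Integrable.of_bound hg C hC
  have hh_meas : AEStronglyMeasurable h μ := stronglyMeasurable_condExp.aestronglyMeasurable.mono hm
  have hhC := ae_norm_condExp_le hm hg_int hC
  have hgh_int : Integrable (fun ω => ⟪h ω, g ω⟫_ℝ) μ :=
    integrable_inner_of_bound_left hh_meas hhC hg_int
  have hh2 := integrable_norm_sq_of_bound hh_meas hhC
  have hproj : ∫ ω, ⟪h ω, g ω⟫_ℝ ∂μ = ∫ ω, ‖h ω‖ ^ 2 ∂μ := by
    rw [integral_inner_condExp_right hm stronglyMeasurable_condExp hhC hg_int]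
    simp_rw [real_inner_self_eq_norm_sq]
    rfl
  calc ∫ ω, ‖g ω‖ ^ 2 ∂μ
      = ∫ ω, (‖g ω - h ω‖ ^ 2 + 2 * ⟪h ω, g ω⟫_ℝ - ‖h ω‖ ^ 2) ∂μ := by
        congr 1; ext ω; rw [norm_sub_sq_real, real_inner_comm]; ring
    _ = ∫ ω, ‖g ω - h ω‖ ^ 2 ∂μ + 2 * ∫ ω, ⟪h ω, g ω⟫_ℝ ∂μ - ∫ ω, ‖h ω‖ ^ 2 ∂μ := by
        have hgh2 : Integrable (fun ω => ‖g ω - h ω‖ ^ 2) μ :=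
          integrable_norm_sq_of_bound (hg.sub hh_meas) (C := C + C) <| by
            filter_upwards [hC, hhC] with ω hgω hhω
            exact (norm_sub_le _ _).trans (add_le_add hgω hhω)
        have hsum : Integrable (fun ω => ‖g ω - h ω‖ ^ 2 + 2 * ⟪h ω, g ω⟫_ℝ) μ :=
          hgh2.add (hgh_int.const_mul 2)
        rw [integral_sub hsum hh2, integral_add hgh2 (hgh_int.const_mul 2), integral_const_mul]
    _ = _ := by rw [hproj]; ring

theorem integral_le_of_ae_le_const [IsProbabilityMeasure μ] {φ : Ω → ℝ} (hφ : Integrable φ μ)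
    {c : ℝ} (hc : ∀ᵐ ω ∂μ, φ ω ≤ c) : ∫ ω, φ ω ∂μ ≤ c := by
  simpa using integral_mono_ae hφ (integrable_const c) hc

theorem integral_norm_sq_le_of_condExp (hm : m ≤ mΩ) [IsProbabilityMeasure μ] {g : Ω → E}
    (hg : AEStronglyMeasurable g μ) {C : ℝ} (hC : ∀ᵐ ω ∂μ, ‖g ω‖ ≤ C) {M V : ℝ}
    (hM : ∀ᵐ ω ∂μ, ‖(μ[g|m]) ω‖ ≤ M)
    (hV : ∀ᵐ ω ∂μ, (μ[fun ω' => ‖g ω' - (μ[g|m]) ω'‖ ^ 2|m]) ω ≤ V) :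
    ∫ ω, ‖g ω‖ ^ 2 ∂μ ≤ M ^ 2 + V := by
  have hvar : ∫ ω, ‖g ω - (μ[g|m]) ω‖ ^ 2 ∂μ ≤ V := by
    rw [← integral_condExp hm]
    exact integral_le_of_ae_le_const integrable_condExp hV
  have hmean : ∫ ω, ‖(μ[g|m]) ω‖ ^ 2 ∂μ ≤ M ^ 2 := by
    refine integral_le_of_ae_le_const (integrable_norm_sq_of_bound
      (stronglyMeasurable_condExp.aestronglyMeasurable.mono hm) hM) ?_
    filter_upwards [hM] with ω hω
    exact pow_le_pow_left₀ (norm_nonneg _) hω 2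
  rw [integral_norm_sq_eq_integral_norm_sub_condExp_sq_add hm hg hC]
  linarith

end CondExp

section SGDStep

variable {Ω F : Type*} {m mΩ : MeasurableSpace Ω} {μ : Measure Ω}
  [NormedAddCommGroup F] [InnerProductSpace ℝ F]

theorem integral_norm_sub_smul_sq [IsFiniteMeasure μ] {y g : Ω → F}
    (hy : AEStronglyMeasurable y μ) (hg : AEStronglyMeasurable g μ) {D C : ℝ}
    (hyD : ∀ ω, ‖y ω‖ ≤ D) (hgC : ∀ ω, ‖g ω‖ ≤ C) (γ : ℝ) :
    ∫ ω, ‖y ω - γ • g ω‖ ^ 2 ∂μ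
      = ∫ ω, ‖y ω‖ ^ 2 ∂μ - 2 * γ * ∫ ω, ⟪y ω, g ω⟫_ℝ ∂μ + γ ^ 2 * ∫ ω, ‖g ω‖ ^ 2 ∂μ := by
  have hy2 := integrable_norm_sq_of_bound hy (.of_forall hyD)
  have hg2 := integrable_norm_sq_of_bound hg (.of_forall hgC)
  have hyg := integrable_inner_of_bound_left hy (.of_forall hyD)
    (Integrable.of_bound hg C (.of_forall hgC))
  have hexpand : ∀ ω, ‖y ω - γ • g ω‖ ^ 2
      = ‖y ω‖ ^ 2 - 2 * γ * ⟪y ω, g ω⟫_ℝ + γ ^ 2 * ‖g ω‖ ^ 2 := fun ω => by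
    rw [norm_sub_sq_real, real_inner_smul_right, norm_smul, mul_pow, Real.norm_eq_abs, sq_abs]
    ring
  have hdiff : Integrable (fun ω => ‖y ω‖ ^ 2 - 2 * γ * ⟪y ω, g ω⟫_ℝ) μ :=
    hy2.sub (hyg.const_mul _)
  simp_rw [hexpand]
  rw [integral_add hdiff (hg2.const_mul _), integral_sub hy2 (hyg.const_mul _),
    integral_const_mul, integral_const_mul]

variable [CompleteSpace F] {f : F → ℝ}

theorem ConvexOn.integral_sub_le_integral_inner_add [IsProbabilityMeasure μ]
    (hconv : ConvexOn ℝ Set.univ f) (hf : Differentiable ℝ f) {G : ℝ} (hG : ∀ z, ‖∇ f z‖ ≤ G)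
    {x x₀ v : Ω → F} (hx : AEStronglyMeasurable x μ) (hx₀ : AEStronglyMeasurable x₀ μ)
    (hv : Integrable v μ) {D β : ℝ} (hD : ∀ ω, ‖x ω - x₀ ω‖ ≤ D)
    (hβ : ∀ᵐ ω ∂μ, ‖v ω - ∇ f (x ω)‖ ≤ β) :
    ∫ ω, (f (x ω) - f (x₀ ω)) ∂μ ≤ ∫ ω, ⟪x ω - x₀ ω, v ω⟫_ℝ ∂μ + β * D := by
  have hG0 : 0 ≤ G := (norm_nonneg _).trans (hG 0)
  have hf_int : Integrable (fun ω => f (x ω) - f (x₀ ω)) μ := by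
    refine Integrable.of_bound ((hf.continuous.comp_aestronglyMeasurable hx).sub
      (hf.continuous.comp_aestronglyMeasurable hx₀)) (G * D) (.of_forall fun ω => ?_)
    exact (abs_sub_le_of_norm_gradient_le hf hG _ _).trans (mul_le_mul_of_nonneg_left (hD ω) hG0)
  have hinner_int : Integrable (fun ω => ⟪x ω - x₀ ω, v ω⟫_ℝ) μ :=
    integrable_inner_of_bound_left (hx.sub hx₀) (.of_forall hD) hv
  have hpointwise : ∀ᵐ ω ∂μ, f (x ω) - f (x₀ ω) ≤ ⟪x ω - x₀ ω, v ω⟫_ℝ + β * D := by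
    filter_upwards [hβ] with ω hω
    have hfirst := hconv.add_inner_gradient_sub_le (hf (x ω)) (x₀ ω)
    have hbias : |⟪x ω - x₀ ω, v ω - ∇ f (x ω)⟫_ℝ| ≤ β * D := by
      refine (abs_real_inner_le_norm _ _).trans ?_
      rw [mul_comm β]
      exact mul_le_mul (hD ω) hω (norm_nonneg _) ((norm_nonneg _).trans (hD ω))
    have hsplit : ⟪∇ f (x ω), x₀ ω - x ω⟫_ℝ
        = ⟪x ω - x₀ ω, v ω - ∇ f (x ω)⟫_ℝ - ⟪x ω - x₀ ω, v ω⟫_ℝ := by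
      simp only [inner_sub_left, inner_sub_right, real_inner_comm]
      ring
    linarith [abs_le.mp hbias]
  calc ∫ ω, (f (x ω) - f (x₀ ω)) ∂μ ≤ ∫ ω, (⟪x ω - x₀ ω, v ω⟫_ℝ + β * D) ∂μ :=
        integral_mono_ae hf_int (hinner_int.add (integrable_const _)) hpointwise
    _ = ∫ ω, ⟪x ω - x₀ ω, v ω⟫_ℝ ∂μ + β * D := by
        rw [integral_add hinner_int (integrable_const _)]; simp

theorem two_mul_integral_sub_le_of_sgd_step (hm : m ≤ mΩ) [IsProbabilityMeasure μ]
    (hconv : ConvexOn ℝ Set.univ f) (hf : Differentiable ℝ f) {G : ℝ}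
    (hG : ∀ z, ‖∇ f z‖ ≤ G) {x x₀ g : Ω → F} (hx : StronglyMeasurable[m] x)
    (hx₀ : StronglyMeasurable[m] x₀) (hg : AEStronglyMeasurable g μ) {γ D β V : ℝ} (hγ : 0 < γ)
    (hD : ∀ ω, ‖x ω - x₀ ω‖ ≤ D) (hD' : ∀ ω, ‖x ω - γ • g ω - x₀ ω‖ ≤ D)
    (hβ : ∀ᵐ ω ∂μ, ‖(μ[g|m]) ω - ∇ f (x ω)‖ ≤ β)
    (hV : ∀ᵐ ω ∂μ, (μ[fun ω' => ‖g ω' - (μ[g|m]) ω'‖ ^ 2|m]) ω ≤ V) :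
    2 * γ * ∫ ω, (f (x ω) - f (x₀ ω)) ∂μ
      ≤ ∫ ω, ‖x ω - x₀ ω‖ ^ 2 ∂μ - ∫ ω, ‖x ω - γ • g ω - x₀ ω‖ ^ 2 ∂μ
        + 2 * γ * β * D + γ ^ 2 * ((G + β) ^ 2 + V) := by
  have hy : StronglyMeasurable[m] (fun ω => x ω - x₀ ω) := hx.sub hx₀
  have hgC : ∀ ω, ‖g ω‖ ≤ 2 * D / γ := fun ω => by
    rw [le_div_iff₀' hγ, ← Real.norm_of_nonneg hγ.le, ← norm_smul]
    calc ‖γ • g ω‖ = ‖(x ω - x₀ ω) - (x ω - γ • g ω - x₀ ω)‖ := by congr 1; abel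
      _ ≤ 2 * D := (norm_sub_le _ _).trans (by linarith [hD ω, hD' ω])
  have hg_int : Integrable g μ := .of_bound hg _ (.of_forall hgC)
  have hM : ∀ᵐ ω ∂μ, ‖(μ[g|m]) ω‖ ≤ G + β := by
    filter_upwards [hβ] with ω hω
    exact (norm_le_insert' _ (∇ f (x ω))).trans (add_le_add (hG _) hω)
  have hexpand := integral_norm_sub_smul_sq (μ := μ) (hy.mono hm).aestronglyMeasurable hg hD hgC γ
  have htower := integral_inner_condExp_right hm hy (.of_forall hD) hg_int
  have hlower := hconv.integral_sub_le_integral_inner_add hf hG (hx.mono hm).aestronglyMeasurable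
    (hx₀.mono hm).aestronglyMeasurable integrable_condExp hD hβ
  have hsecond := integral_norm_sq_le_of_condExp hm hg (.of_forall hgC) hM hV
  rw [htower] at hexpand
  simp_rw [sub_right_comm _ (γ • g _)]
  linarith [mul_le_mul_of_nonneg_left hlower (by positivity : (0 : ℝ) ≤ 2 * γ),
    mul_le_mul_of_nonneg_left hsecond (sq_nonneg γ)]

end SGDStep

theorem sgd_bgo_O2_window_lemma_general
    {d : ℕ} {Ω : Type*} {mΩ : MeasurableSpace Ω}
    (μ : Measure Ω) [IsProbabilityMeasure μ]
    (ℱ : Filtration ℕ mΩ)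
    (f : EuclideanSpace ℝ (Fin d) → ℝ)
    (hf : Differentiable ℝ f)
    (hconv : ConvexOn ℝ Set.univ f)
    (B c₁ c₂ c₂' c₃ : ℝ)
    -- (A2): `‖∇f(x)‖₁ ≤ B`
    (hgradB : ∀ x, ∑ i, |gradient f x i| ≤ B)
    (N : ℕ)
    -- algorithm parameters: positive step sizes, perturbation constants and
    -- batch sizes
    (γ η m : ℕ → ℝ)
    (hγpos : ∀ k, 1 ≤ k → 0 < γ k)
    -- iterates and oracle outputs
    (x g : ℕ → Ω → EuclideanSpace ℝ (Fin d))
    (hx_adapted : ∀ k, StronglyMeasurable[ℱ k] (x k))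
    (hg_int : ∀ k, Integrable (g k) μ)
    (hrec : ∀ k, 1 ≤ k → k ≤ N → ∀ ω, x (k + 1) ω = x k ω - γ k • g k ω)
    -- oracle (O2), condition (a): bias bound in the sup-norm
    (hbias : ∀ k, 1 ≤ k → k ≤ N →
      ∀ᵐ ω ∂μ, ∀ i, |(μ[g k|ℱ k]) ω i - gradient f (x k ω) i|
        ≤ c₁ * η k + c₃ / (η k * Real.sqrt (m k)))
    -- oracle (O2), condition (b): conditional variance bound
    (hvar : ∀ k, 1 ≤ k → k ≤ N →
      ∀ᵐ ω ∂μ,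
        (μ[fun ω' => ‖g k ω' - (μ[g k|ℱ k]) ω'‖ ^ 2|ℱ k]) ω ≤ c₂ * η k ^ 2 + c₂')
    -- indices of the window
    (k₀ k₁ : ℕ) (hk₀ : 1 < k₀) (hk₀k₁ : k₀ < k₁) (hk₁ : k₁ ≤ N)
    -- `D` bounds the distances of the iterates to `x_{k₀}`
    (D : ℝ)
    (hD : ∀ k, ∀ ω, ‖x k ω - x k₀ ω‖ ≤ D)
    (E B2 : ℕ → ℝ)
    (hE : ∀ k, E k = c₁ * η k + c₃ / (η k * Real.sqrt (m k)))
    (hB2 : ∀ k, B2 k = B ^ 2 + 2 * Real.sqrt d * B * E k + d * E k ^ 2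
        + c₂ * η k ^ 2 + c₂') :
    ∑ k ∈ Finset.Icc k₀ k₁,
        2 * γ k * ∫ ω, (f (x k ω) - f (x k₀ ω)) ∂μ
      ≤ ∑ k ∈ Finset.Icc k₀ k₁,
          (2 * Real.sqrt d * γ k * D * E k + γ k ^ 2 * B2 k) := by
  set a : ℕ → ℝ := fun k => ∫ ω, ‖x k ω - x k₀ ω‖ ^ 2 ∂μ
  set R : ℕ → ℝ := fun k => 2 * Real.sqrt d * γ k * D * E k + γ k ^ 2 * B2 k
  have hstep : ∀ k ∈ Finset.Icc k₀ k₁,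
      2 * γ k * ∫ ω, (f (x k ω) - f (x k₀ ω)) ∂μ ≤ -(a (k + 1) - a k) + R k := by
    intro k hk
    obtain ⟨hk₀k, hkk₁⟩ := Finset.mem_Icc.mp hk
    have h1k : 1 ≤ k := by omega
    have hkN : k ≤ N := by omega
    have hβ : ∀ᵐ ω ∂μ, ‖(μ[g k|ℱ k]) ω - ∇ f (x k ω)‖ ≤ √d * E k := by
      filter_upwards [hbias k h1k hkN] with ω hω
      simpa using EuclideanSpace.norm_le_sqrt_card_mul fun i => (hω i).trans_eq (hE k).symm
    have hB2' : B2 k = (B + √d * E k) ^ 2 + (c₂ * η k ^ 2 + c₂') := by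
      rw [hB2 k, add_sq, mul_pow, Real.sq_sqrt d.cast_nonneg]
      ring
    have hsgd := two_mul_integral_sub_le_of_sgd_step (ℱ.le k) hconv hf
      (fun z => (EuclideanSpace.norm_le_sum_abs _).trans (hgradB z)) (hx_adapted k)
      ((hx_adapted k₀).mono (ℱ.mono hk₀k)) (hg_int k).aestronglyMeasurable (hγpos k h1k) (hD k)
      (fun ω => hrec k h1k hkN ω ▸ hD (k + 1) ω) hβ (hvar k h1k hkN)
    simp_rw [← hrec k h1k hkN] at hsgd
    simp only [a, R, hB2']
    linarith
  have ha₀ : a k₀ = 0 := by simp [a]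
  have ha₁ : 0 ≤ a (k₁ + 1) := integral_nonneg fun ω => sq_nonneg _
  calc ∑ k ∈ Finset.Icc k₀ k₁, 2 * γ k * ∫ ω, (f (x k ω) - f (x k₀ ω)) ∂μ
      ≤ ∑ k ∈ Finset.Icc k₀ k₁, (-(a (k + 1) - a k) + R k) := Finset.sum_le_sum hstep
    _ = a k₀ - a (k₁ + 1) + ∑ k ∈ Finset.Icc k₀ k₁, R k := by
        rw [Finset.sum_add_distrib, Finset.sum_neg_distrib, Finset.sum_Icc_sub hk₀k₁.le]
        ring
    _ ≤ ∑ k ∈ Finset.Icc k₀ k₁, R k := by linarith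

/-- **SGD-BGO under oracle (O2): key inequality over a window of iterations**
(Lemma 1 in the paper). For indices `1 < k₀ < k₁ ≤ N`, assuming the distances
`‖x_k - x_{k₀}‖` are bounded by `D`, the weighted sum of expected suboptimality
gaps relative to `x_{k₀}` is bounded. -/
theorem sgd_bgo_O2_window_lemma
    {d : ℕ} {Ω : Type*} {mΩ : MeasurableSpace Ω}
    (μ : Measure Ω) [IsProbabilityMeasure μ]
    (ℱ : Filtration ℕ mΩ)
    (f : EuclideanSpace ℝ (Fin d) → ℝ)
    (hf : Differentiable ℝ f)
    (hconv : ConvexOn ℝ Set.univ f)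
    (B c₁ c₂ c₂' c₃ : ℝ)
    (hB : 0 < B)
    (hc₁ : 0 < c₁) (hc₂ : 0 < c₂) (hc₂' : 0 < c₂') (hc₃ : 0 < c₃)
    -- (A2): `‖∇f(x)‖₁ ≤ B`
    (hgradB : ∀ x, ∑ i, |gradient f x i| ≤ B)
    (N : ℕ)
    -- algorithm parameters: positive step sizes, perturbation constants and
    -- batch sizes
    (γ η m : ℕ → ℝ)
    (hγpos : ∀ k, 1 ≤ k → 0 < γ k)
    (hηpos : ∀ k, 1 ≤ k → 0 < η k)
    (hmpos : ∀ k, 1 ≤ k → 0 < m k)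
    -- iterates and oracle outputs
    (x g : ℕ → Ω → EuclideanSpace ℝ (Fin d))
    (hx_adapted : ∀ k, StronglyMeasurable[ℱ k] (x k))
    (hg_int : ∀ k, Integrable (g k) μ)
    (hrec : ∀ k, 1 ≤ k → k ≤ N → ∀ ω, x (k + 1) ω = x k ω - γ k • g k ω)
    -- oracle (O2), condition (a): bias bound in the sup-norm
    (hbias : ∀ k, 1 ≤ k → k ≤ N →
      ∀ᵐ ω ∂μ, ∀ i, |(μ[g k|ℱ k]) ω i - gradient f (x k ω) i|
        ≤ c₁ * η k + c₃ / (η k * Real.sqrt (m k)))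
    -- oracle (O2), condition (b): conditional variance bound
    (hvar : ∀ k, 1 ≤ k → k ≤ N →
      ∀ᵐ ω ∂μ,
        (μ[fun ω' => ‖g k ω' - (μ[g k|ℱ k]) ω'‖ ^ 2|ℱ k]) ω ≤ c₂ * η k ^ 2 + c₂')
    -- indices of the window
    (k₀ k₁ : ℕ) (hk₀ : 1 < k₀) (hk₀k₁ : k₀ < k₁) (hk₁ : k₁ ≤ N)
    -- `D` bounds the distances of the iterates to `x_{k₀}`
    (D : ℝ)
    (hD : ∀ k, ∀ ω, ‖x k ω - x k₀ ω‖ ≤ D)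
    (E B2 : ℕ → ℝ)
    (hE : ∀ k, E k = c₁ * η k + c₃ / (η k * Real.sqrt (m k)))
    (hB2 : ∀ k, B2 k = B ^ 2 + 2 * Real.sqrt d * B * E k + d * E k ^ 2
        + c₂ * η k ^ 2 + c₂') :
    ∑ k ∈ Finset.Icc k₀ k₁,
        2 * γ k * ∫ ω, (f (x k ω) - f (x k₀ ω)) ∂μ
      ≤ ∑ k ∈ Finset.Icc k₀ k₁,
          (2 * Real.sqrt d * γ k * D * E k + γ k ^ 2 * B2 k) :=
  sgd_bgo_O2_window_lemma_general μ ℱ f hf hconv B c₁ c₂ c₂' c₃ hgradB N γ η m hγpos x g hx_adapted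
    hg_int hrec hbias hvar k₀ k₁ hk₀ hk₀k₁ hk₁ D hD E B2 hE hB2
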